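/- Let Θ : A* → A* be an involutive antimorphism and let u ∈ A^ℕ be a recurrent infinite word with finite Θ-palindromic defect. Then there exists a positive integer H such that for every factor w of u with |w| > H, every factor v of u that begins with w, ends with Θ(w), and contains no other occurrence of w or of Θ(w), is a Θ-palindrome. -/
import Mathlib


/-!
Basic notions from combinatorics on words: involutive antimorphisms,
Θ-palindromes, factors of infinite words, palindromic defect, richness.
-/

/-- `Θ` is an involutive antimorphism of the free monoid `A*` (words as lists). -/
def IsAntimorphism {A : Type*} (Θ : List A → List A) : Prop :=
  (∀ x y : List A, Θ (x ++ y) = Θ y ++ Θ x) ∧ ∀ x : List A, Θ (Θ x) = x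

/-- The factor `u_i u_{i+1} … u_{i+n-1}` of the infinite word `u`. -/
def factorAt {A : Type*} (u : ℕ → A) (i n : ℕ) : List A :=
  (List.range n).map fun k => u (i + k)

/-- `i` is an occurrence of `w` in the infinite word `u`. -/
def OccursAt {A : Type*} (u : ℕ → A) (w : List A) (i : ℕ) : Prop :=
  w = factorAt u i w.length

/-- `w` is a factor of the infinite word `u`. -/
def IsFactorOf {A : Type*} (w : List A) (u : ℕ → A) : Prop :=
  ∃ i, OccursAt u w i

/-- The prefix of length `n` of the infinite word `u`. -/
def prefixWord {A : Type*} (u : ℕ → A) (n : ℕ) : List A :=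
  factorAt u 0 n

/-- `u` is recurrent: every factor has infinitely many occurrences. -/
def Recurrent {A : Type*} (u : ℕ → A) : Prop :=
  ∀ w, IsFactorOf w u → ∀ N, ∃ i, N ≤ i ∧ OccursAt u w i

/-- `u` is uniformly recurrent: every factor occurs with bounded gaps
(equivalently, every factor has finitely many return words). -/
def UniformlyRecurrent {A : Type*} (u : ℕ → A) : Prop :=
  ∀ w, IsFactorOf w u → ∃ R, ∀ N, ∃ i, N ≤ i ∧ i < N + R ∧ OccursAt u w i

/-- `i` is an occurrence of the word `s` in the finite word `r`. -/
def OccursIn {A : Type*} (s r : List A) (i : ℕ) : Prop :=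
  i + s.length ≤ r.length ∧ s = (r.drop i).take s.length

/-- `s` occurs exactly once in `r`. -/
def Unioccurrent {A : Type*} (s r : List A) : Prop :=
  Set.ncard {i | OccursIn s r i} = 1

/-- The set `Pal_Θ(w)` of `Θ`-palindromic factors of the finite word `w`
(the empty word included). -/
def palSet {A : Type*} (Θ : List A → List A) (w : List A) : Set (List A) :=
  {p | p <:+: w ∧ Θ p = p}

/-- `γ_Θ(w)`: the number of pairs `{a, Θ(a)}` where `a` is a letter occurring
in `w` with `a ≠ Θ(a)`. -/
noncomputable def gammaTheta {A : Type*} (Θ : List A → List A) (w : List A) : ℕ :=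
  Set.ncard {P : Set A | ∃ a, a ∈ w ∧ Θ [a] ≠ [a] ∧ P = {b | [b] = [a] ∨ [b] = Θ [a]}}

/-- The `Θ`-palindromic defect `D_Θ(w) = |w| + 1 - γ_Θ(w) - #Pal_Θ(w)` of a finite word. -/
noncomputable def defect {A : Type*} (Θ : List A → List A) (w : List A) : ℤ :=
  (w.length : ℤ) + 1 - gammaTheta Θ w - (palSet Θ w).ncard

/-- The infinite word `u` has finite `Θ`-palindromic defect
(`D_Θ(u) = sup { D_Θ(w) : w factor of u } < ∞`), i.e. `u` is almost `Θ`-rich. -/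
def FiniteDefect {A : Type*} (Θ : List A → List A) (u : ℕ → A) : Prop :=
  ∃ C : ℤ, ∀ w, IsFactorOf w u → defect Θ w ≤ C

/-- The infinite word `u` is `Θ`-rich: every factor `w` satisfies
`#Pal_Θ(w) = |w| + 1 - γ_Θ(w)`, i.e. has zero `Θ`-defect. -/
def RichWord {A : Type*} (Θ : List A → List A) (u : ℕ → A) : Prop :=
  ∀ w, IsFactorOf w u → defect Θ w = 0

/-- The language of `u` is closed under `Θ`. -/
def LangClosedUnder {A : Type*} (Θ : List A → List A) (u : ℕ → A) : Prop :=
  ∀ w, IsFactorOf w u → IsFactorOf (Θ w) u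

/-- `u` is the image of the infinite word `v` under the monoid morphism
`B* → A*` determined by `φ` on letters, i.e. `u = φ(v₀)φ(v₁)φ(v₂)…`. -/
def IsMorphicImage {A B : Type*} (u : ℕ → A) (φ : B → List A) (v : ℕ → B) : Prop :=
  (∀ n, OccursAt u ((prefixWord v n).flatMap φ) 0) ∧
    ∀ N, ∃ n, N ≤ ((prefixWord v n).flatMap φ).length

/-- The occurrences of `w` and `w'` in `u` alternate: listing in increasing order
all occurrences of `w` or `w'`, consecutive indices are alternately occurrences
of `w` and of `w'` (between two occurrences of one of them, the second of which is
not an occurrence of the other, there is an occurrence of the other). -/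
def AlternateIn {A : Type*} (u : ℕ → A) (w w' : List A) : Prop :=
  (∀ i j, i < j → OccursAt u w i → OccursAt u w j → ¬ OccursAt u w' j →
    ∃ k, i < k ∧ k < j ∧ OccursAt u w' k) ∧
  (∀ i j, i < j → OccursAt u w' i → OccursAt u w' j → ¬ OccursAt u w j →
    ∃ k, i < k ∧ k < j ∧ OccursAt u w k)

/-- Factor complexity `C(n)` of the infinite word `u`. -/
noncomputable def complexity {A : Type*} (u : ℕ → A) (n : ℕ) : ℕ :=
  Set.ncard {w : List A | IsFactorOf w u ∧ w.length = n}

/-- `Θ`-palindromic complexity `P_Θ(n)` of the infinite word `u`. -/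
noncomputable def palComplexity {A : Type*} (Θ : List A → List A) (u : ℕ → A) (n : ℕ) : ℕ :=
  Set.ncard {w : List A | IsFactorOf w u ∧ w.length = n ∧ Θ w = w}

/-- `r` is a complete return word of `w` in `u`: a factor of `u` with exactly two
occurrences of `w`, one as a prefix and one as a suffix. -/
def IsCompleteReturnWord {A : Type*} (u : ℕ → A) (w r : List A) : Prop :=
  IsFactorOf r u ∧ w <+: r ∧ w <:+ r ∧ Set.ncard {i | OccursIn w r i} = 2

section ReturnLikeAux

variable {A : Type*}

lemma theta_nil' {Θ : List A → List A} (hΘ : IsAntimorphism Θ) : Θ [] = [] := by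
  have h := hΘ.1 [] []
  simp only [List.append_nil] at h
  have hl := congrArg List.length h
  rw [List.length_append] at hl
  exact List.length_eq_zero_iff.mp (by omega)

lemma theta_len_le {Θ : List A → List A} (hΘ : IsAntimorphism Θ) :
    ∀ x : List A, x.length ≤ (Θ x).length := by
  intro x
  induction x with
  | nil => simp
  | cons a t ih =>
    have h1 : Θ (a :: t) = Θ t ++ Θ [a] := by
      have h := hΘ.1 [a] t
      simpa using h
    have h2 : Θ [a] ≠ [] := by
      intro h
      have h3 := hΘ.2 [a]
      rw [h, theta_nil' hΘ] at h3
      exact absurd h3 (by simp)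
    have h4 : 1 ≤ (Θ [a]).length := by
      rcases hh : Θ [a] with _ | ⟨b, l⟩
      · exact absurd hh h2
      · simp
    rw [h1, List.length_append]
    simp only [List.length_cons]
    omega

lemma theta_length {Θ : List A → List A} (hΘ : IsAntimorphism Θ) (x : List A) :
    (Θ x).length = x.length := by
  have h1 := theta_len_le hΘ x
  have h2 := theta_len_le hΘ (Θ x)
  rw [hΘ.2] at h2
  omega

lemma theta_suffix {Θ : List A → List A} (hΘ : IsAntimorphism Θ) {x y : List A}
    (h : x <+: y) : Θ x <:+ Θ y := by
  obtain ⟨t, rfl⟩ := h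
  exact ⟨Θ t, (hΘ.1 x t).symm⟩

lemma theta_prefix {Θ : List A → List A} (hΘ : IsAntimorphism Θ) {x y : List A}
    (h : x <:+ y) : Θ x <+: Θ y := by
  obtain ⟨t, rfl⟩ := h
  exact ⟨Θ t, (hΘ.1 t x).symm⟩

lemma suffix_of_suffix_length_le' {l₁ l₂ l₃ : List A} (h1 : l₁ <:+ l₃) (h2 : l₂ <:+ l₃)
    (h : l₁.length ≤ l₂.length) : l₁ <:+ l₂ := by
  rw [← List.reverse_prefix] at h1 h2 ⊢
  exact List.prefix_of_prefix_length_le h1 h2 (by simpa)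

lemma suffix_eq_of_length {l₁ l₂ : List A} (h : l₁ <:+ l₂) (hl : l₁.length = l₂.length) :
    l₁ = l₂ := by
  obtain ⟨t, rfl⟩ := h
  rw [List.length_append] at hl
  have ht : t = [] := List.length_eq_zero_iff.mp (by omega)
  rw [ht, List.nil_append]

lemma infix_concat' {x l : List A} {c : A} (h : x <:+: l ++ [c]) :
    x <:+ l ++ [c] ∨ x <:+: l := by
  obtain ⟨s, t, hst⟩ := h
  rcases List.eq_nil_or_concat t with rfl | ⟨t', c', rfl⟩
  · left; exact ⟨s, by simpa using hst⟩
  · right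
    have h2 : (s ++ x ++ t') ++ [c'] = l ++ [c] := by
      rw [← hst]; simp [List.append_assoc]
    have h3 := List.append_inj' h2 (by simp)
    exact ⟨s, t', h3.1⟩

lemma factorAt_length (u : ℕ → A) (i n : ℕ) : (factorAt u i n).length = n := by
  simp [factorAt]

lemma prefixWord_length (u : ℕ → A) (n : ℕ) : (prefixWord u n).length = n := by
  simp [prefixWord, factorAt]

lemma prefixWord_add (u : ℕ → A) (i k : ℕ) :
    prefixWord u (i + k) = prefixWord u i ++ factorAt u i k := by
  simp only [prefixWord, factorAt, Nat.zero_add]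
  rw [List.range_add, List.map_append, List.map_map]
  simp [Function.comp]

lemma prefixWord_succ (u : ℕ → A) (n : ℕ) :
    prefixWord u (n + 1) = prefixWord u n ++ [u n] := by
  simp [prefixWord, factorAt, List.range_succ]

lemma occursAt_iff' (u : ℕ → A) (x : List A) (i : ℕ) :
    OccursAt u x i ↔ prefixWord u (i + x.length) = prefixWord u i ++ x := by
  unfold OccursAt
  rw [prefixWord_add]
  constructor
  · intro h; rw [← h]
  · intro h; exact (List.append_cancel_left h).symm

lemma occursAt_of_eq_append (u : ℕ → A) {m : ℕ} {a x b : List A}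
    (h : prefixWord u m = a ++ x ++ b) : OccursAt u x a.length := by
  have hm : m = a.length + x.length + b.length := by
    have h0 := congrArg List.length h
    rw [prefixWord_length] at h0
    simp [List.length_append] at h0
    omega
  have h1 := prefixWord_add u (a.length + x.length) b.length
  rw [← hm, h] at h1
  have h2 := (List.append_inj h1 (by simp [prefixWord_length, List.length_append])).1
  rw [prefixWord_add] at h2
  have h3 := List.append_inj h2.symm (by simp [prefixWord_length])
  exact h3.2.symm

lemma occursAt_of_prefix (u : ℕ → A) {g x : List A} {i : ℕ}
    (h : OccursAt u g i) (hx : x <+: g) : OccursAt u x i := by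
  obtain ⟨t, rfl⟩ := hx
  rw [occursAt_iff'] at h
  have h3 := occursAt_of_eq_append u (m := i + (x ++ t).length)
      (a := prefixWord u i) (x := x) (b := t) (by rw [h, ← List.append_assoc])
  simpa [prefixWord_length] using h3

lemma suffix_of_occursAt (u : ℕ → A) {x : List A} {i : ℕ} (h : OccursAt u x i) :
    x <:+ prefixWord u (i + x.length) :=
  ⟨prefixWord u i, ((occursAt_iff' u x i).1 h).symm⟩

lemma infix_of_occursAt_le (u : ℕ → A) {x : List A} {i m : ℕ} (h : OccursAt u x i)
    (hm : i + x.length ≤ m) : x <:+: prefixWord u m := by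
  have h1 : prefixWord u m
      = prefixWord u (i + x.length) ++ factorAt u (i + x.length) (m - (i + x.length)) := by
    rw [← prefixWord_add]; congr 1; omega
  rw [(occursAt_iff' u x i).1 h] at h1
  exact ⟨prefixWord u i, factorAt u (i + x.length) (m - (i + x.length)),
    by rw [h1, List.append_assoc]⟩

lemma occursIn_iff' (x y : List A) (i : ℕ) :
    OccursIn x y i ↔ ∃ a b : List A, y = a ++ x ++ b ∧ a.length = i := by
  constructor
  · rintro ⟨hle, hx⟩
    refine ⟨y.take i, (y.drop i).drop x.length, ?_, by rw [List.length_take]; omega⟩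
    conv_lhs => rw [← List.take_append_drop i y]
    rw [List.append_assoc]
    congr 1
    conv_lhs => rw [← List.take_append_drop x.length (y.drop i)]
    rw [← hx]
  · rintro ⟨a, b, rfl, rfl⟩
    refine ⟨by simp [List.length_append], ?_⟩
    rw [List.append_assoc, List.drop_left, List.take_left]

lemma occursIn_theta {Θ : List A → List A} (hΘ : IsAntimorphism Θ) {x y : List A} {i : ℕ}
    (h : OccursIn x y i) : OccursIn (Θ x) (Θ y) (y.length - x.length - i) := by
  rw [occursIn_iff'] at h ⊢
  obtain ⟨a, b, rfl, rfl⟩ := h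
  refine ⟨Θ b, Θ a, ?_, ?_⟩
  · rw [hΘ.1 (a ++ x) b, hΘ.1 a x, List.append_assoc]
  · rw [theta_length hΘ]
    simp only [List.length_append]
    omega

lemma palSet_finite (Θ : List A → List A) (w : List A) : (palSet Θ w).Finite := by
  classical
  apply Set.Finite.subset w.sublists.toFinset.finite_toSet
  intro p hp
  exact List.mem_toFinset.mpr (List.mem_sublists.mpr hp.1.sublist)

lemma newpal_nested {Θ : List A → List A} (hΘ : IsAntimorphism Θ) {L : List A} {c : A}
    {x y : List A}
    (hxp : Θ x = x) (hyp : Θ y = y)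
    (hxs : x <:+ L ++ [c]) (hys : y <:+ L ++ [c])
    (hxn : ¬ x <:+: L) (hle : x.length ≤ y.length) : x = y := by
  have hxy : x <:+ y := suffix_of_suffix_length_le' hxs hys hle
  obtain ⟨z, hz⟩ := hxy
  have hy2 : y = x ++ Θ z := by
    rw [← hyp, ← hz, hΘ.1, hxp]
  rcases List.eq_nil_or_concat (Θ z) with hznil | ⟨t', c', hzc⟩
  · rw [hznil, List.append_nil] at hy2; exact hy2.symm
  · exfalso
    obtain ⟨r, hr⟩ := hys
    rw [hy2, hzc] at hr
    have h2 : (r ++ x ++ t') ++ [c'] = L ++ [c] := by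
      rw [← hr]; simp [List.append_assoc]
    have h3 := List.append_inj' h2 (by simp)
    exact hxn ⟨r, t', h3.1⟩

lemma newpal {Θ : List A → List A} (hΘ : IsAntimorphism Θ) [Fintype A] (u : ℕ → A)
    (hdef : FiniteDefect Θ u) :
    ∃ N : ℕ, ∀ n, N ≤ n → ∃ Q, Θ Q = Q ∧ Q <:+ prefixWord u (n + 1) ∧
      ¬ Q <:+: prefixWord u n := by
  classical
  obtain ⟨C, hC⟩ := hdef
  have hpref : ∀ m, IsFactorOf (prefixWord u m) u := by
    intro m
    refine ⟨0, ?_⟩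
    show prefixWord u m = factorAt u 0 (prefixWord u m).length
    rw [prefixWord_length]
    rfl
  have hp0 : prefixWord u 0 = [] := by simp [prefixWord, factorAt]
  have hps0 : palSet Θ ([] : List A) = {[]} := by
    ext p
    simp only [palSet, Set.mem_setOf_eq, Set.mem_singleton_iff]
    constructor
    · rintro ⟨h1, _⟩
      exact List.sublist_nil.mp h1.sublist
    · rintro rfl
      exact ⟨List.infix_rfl, theta_nil' hΘ⟩
  have hC0 : 0 ≤ C := by
    have h0 := hC (prefixWord u 0) (hpref 0)
    rw [hp0] at h0
    have hg0 : gammaTheta Θ ([] : List A) = 0 := by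
      have he : {P : Set A | ∃ a, a ∈ ([] : List A) ∧ Θ [a] ≠ [a]
          ∧ P = {b | [b] = [a] ∨ [b] = Θ [a]}} = ∅ := by
        ext P; simp
      rw [gammaTheta, he, Set.ncard_empty]
    rw [defect, hg0, hps0, Set.ncard_singleton] at h0
    simp at h0
    omega
  set Γ : ℕ := Nat.card (Set A) with hΓ
  have hgamma : ∀ w : List A, gammaTheta Θ w ≤ Γ := by
    intro w
    have hfin : (Set.univ : Set (Set A)).Finite := Set.finite_univ
    calc gammaTheta Θ w ≤ (Set.univ : Set (Set A)).ncard :=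
          Set.ncard_le_ncard (Set.subset_univ _) hfin
      _ = Γ := by rw [Set.ncard_univ]
  set a : ℕ → ℕ := fun n => (palSet Θ (prefixWord u n)).ncard with ha
  have hsub : ∀ n, palSet Θ (prefixWord u n) ⊆ palSet Θ (prefixWord u (n + 1)) := by
    intro n p hp
    rw [prefixWord_succ]
    exact ⟨hp.1.trans (List.prefix_append _ _).isInfix, hp.2⟩
  have hstep_le : ∀ n, a (n + 1) ≤ a n + 1 := by
    intro n
    have hss : ((palSet Θ (prefixWord u (n + 1))) \ (palSet Θ (prefixWord u n))).Subsingleton := by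
      intro x hx y hy
      have hxinf : x <:+: prefixWord u n ++ [u n] := by
        rw [← prefixWord_succ]; exact hx.1.1
      have hyinf : y <:+: prefixWord u n ++ [u n] := by
        rw [← prefixWord_succ]; exact hy.1.1
      have hxn : ¬ x <:+: prefixWord u n := fun h => hx.2 ⟨h, hx.1.2⟩
      have hyn : ¬ y <:+: prefixWord u n := fun h => hy.2 ⟨h, hy.1.2⟩
      have hxs : x <:+ prefixWord u n ++ [u n] := by
        rcases infix_concat' hxinf with h | h
        · exact h
        · exact absurd h hxn
      have hys : y <:+ prefixWord u n ++ [u n] := by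
        rcases infix_concat' hyinf with h | h
        · exact h
        · exact absurd h hyn
      rcases le_total x.length y.length with hle | hle
      · exact newpal_nested hΘ hx.1.2 hy.1.2 hxs hys hxn hle
      · exact (newpal_nested hΘ hy.1.2 hx.1.2 hys hxs hyn hle).symm
    rcases hss.eq_empty_or_singleton with hd | ⟨x, hd⟩
    · have h1 : palSet Θ (prefixWord u (n + 1)) ⊆ palSet Θ (prefixWord u n) :=
        Set.diff_eq_empty.mp hd
      have h2 := Set.ncard_le_ncard h1 (palSet_finite Θ _)
      simp only [ha]
      omega
    · have hsub2 : palSet Θ (prefixWord u (n + 1)) ⊆ insert x (palSet Θ (prefixWord u n)) := by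
        intro p hp
        by_cases hmem : p ∈ palSet Θ (prefixWord u n)
        · exact Set.mem_insert_of_mem _ hmem
        · have hpd : p ∈ palSet Θ (prefixWord u (n + 1)) \ palSet Θ (prefixWord u n) :=
            ⟨hp, hmem⟩
          rw [hd] at hpd
          exact Set.mem_insert_iff.mpr (Or.inl hpd)
      have h1 := Set.ncard_le_ncard hsub2 ((palSet_finite Θ _).insert x)
      have h2 := Set.ncard_insert_le x (palSet Θ (prefixWord u n))
      simp only [ha]
      omega
  have h_a_le : ∀ s t, s ≤ t → a t ≤ a s + (t - s) := by
    intro s t hst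
    induction t, hst using Nat.le_induction with
    | base => simp
    | succ t hst ih =>
      have := hstep_le t
      omega
  have ha0 : a 0 = 1 := by
    simp only [ha]
    rw [hp0, hps0, Set.ncard_singleton]
  have h_lower : ∀ m, m + 1 ≤ C.toNat + Γ + a m := by
    intro m
    have h1 := hC (prefixWord u m) (hpref m)
    rw [defect, prefixWord_length] at h1
    have h2 : (gammaTheta Θ (prefixWord u m) : ℤ) ≤ (Γ : ℤ) := by
      exact_mod_cast hgamma (prefixWord u m)
    have hCt : C ≤ (C.toNat : ℤ) := Int.self_le_toNat C
    have ha' : (a m : ℤ) = ((palSet Θ (prefixWord u m)).ncard : ℤ) := by simp [ha]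
    have h4 : ((m : ℤ)) + 1 ≤ (C.toNat : ℤ) + (Γ : ℤ) + (a m : ℤ) := by omega
    exact_mod_cast h4
  by_contra hcon
  push_neg at hcon
  have hstep2 : ∀ N, ∃ n, N ≤ n ∧ a (n + 1) = a n := by
    intro N
    obtain ⟨n, hn1, hn2⟩ := hcon N
    refine ⟨n, hn1, ?_⟩
    have hseteq : palSet Θ (prefixWord u (n + 1)) = palSet Θ (prefixWord u n) := by
      apply Set.Subset.antisymm _ (hsub n)
      intro p hp
      by_cases hmem : p ∈ palSet Θ (prefixWord u n)
      · exact hmem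
      · have hinf : p <:+: prefixWord u n ++ [u n] := by
          rw [← prefixWord_succ]; exact hp.1
        rcases infix_concat' hinf with hsuf | hinf2
        · have h5 := hn2 p hp.2 (by rw [prefixWord_succ]; exact hsuf)
          exact ⟨h5, hp.2⟩
        · exact absurd ⟨hinf2, hp.2⟩ hmem
    simp only [ha]
    rw [hseteq]
  let g : ℕ → ℕ := fun j =>
    Nat.rec (Classical.choose (hstep2 0)) (fun _ prev => Classical.choose (hstep2 (prev + 1))) j
  have hgsucc : ∀ j, g (j + 1) = Classical.choose (hstep2 (g j + 1)) := fun j => rfl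
  have hgP : ∀ j, a (g j + 1) = a (g j) := by
    intro j
    cases j with
    | zero => exact (Classical.choose_spec (hstep2 0)).2
    | succ j =>
      rw [hgsucc j]
      exact (Classical.choose_spec (hstep2 (g j + 1))).2
  have hgMono : ∀ j, g j + 1 ≤ g (j + 1) := by
    intro j
    rw [hgsucc j]
    exact (Classical.choose_spec (hstep2 (g j + 1))).1
  have hkey : ∀ j, a (g j) + j ≤ g j + 1 := by
    intro j
    induction j with
    | zero =>
      have h1 := h_a_le 0 (g 0) (Nat.zero_le _)
      omega
    | succ j ih =>
      have h1 : a (g (j + 1)) ≤ a (g j + 1) + (g (j + 1) - (g j + 1)) :=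
        h_a_le _ _ (hgMono j)
      have h2 := hgP j
      have h3 := hgMono j
      omega
  have hfin1 := hkey (C.toNat + Γ + 1)
  have hfin2 := h_lower (g (C.toNat + Γ + 1))
  omega

end ReturnLikeAux

/-- **Proposition 6, item 3.** For a recurrent word with finite `Θ`-defect there
is a positive integer `H` such that for every factor `w` longer than `H`, every
factor beginning with `w`, ending with `Θ(w)` and with no other occurrences of
`w` or `Θ(w)` is a `Θ`-palindrome. -/
theorem return_like_factors_are_palindromes_of_finite_defect
    {A : Type*} [Fintype A] (Θ : List A → List A) (hΘ : IsAntimorphism Θ)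
    (u : ℕ → A) (hrec : Recurrent u) (hdef : FiniteDefect Θ u) :
    ∃ H : ℕ, 0 < H ∧ ∀ w : List A, IsFactorOf w u → H < w.length →
      ∀ f : List A, IsFactorOf f u → w <+: f → Θ w <:+ f →
        (∀ i : ℕ, OccursIn w f i ∨ OccursIn (Θ w) f i → i = 0 ∨ i = f.length - w.length) →
        Θ f = f := by
  classical
  obtain ⟨N₁, hN⟩ := newpal hΘ u hdef
  refine ⟨N₁ + 1, Nat.succ_pos _, ?_⟩
  intro w hw hH f hf hpre hsuf hocc
  have hlww : (Θ w).length = w.length := theta_length hΘ w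
  have hlff : (Θ f).length = f.length := theta_length hΘ f
  have hlwf : w.length ≤ f.length := hpre.length_le
  have hex : ∃ n : ℕ, ∃ i, n = i + f.length ∧ (OccursAt u f i ∨ OccursAt u (Θ f) i) := by
    obtain ⟨i, hi⟩ := hf
    exact ⟨i + f.length, i, rfl, Or.inl hi⟩
  obtain ⟨e, ⟨i₁, he, hg⟩, hmin⟩ :
      ∃ e : ℕ, (∃ i, e = i + f.length ∧ (OccursAt u f i ∨ OccursAt u (Θ f) i)) ∧
        ∀ m, m < e → ¬ ∃ i, m = i + f.length ∧ (OccursAt u f i ∨ OccursAt u (Θ f) i) :=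
    ⟨Nat.find hex, Nat.find_spec hex, fun m hm => Nat.find_min hex hm⟩
  obtain ⟨g, hgo, hglen, hgw, hgsw, hgcond, hggoal, hgother⟩ :
      ∃ g : List A, OccursAt u g i₁ ∧ g.length = f.length ∧ w <+: g ∧ Θ w <:+ g ∧
        (∀ j, OccursIn w g j ∨ OccursIn (Θ w) g j → j = 0 ∨ j = f.length - w.length) ∧
        (Θ g = g → Θ f = f) ∧ (Θ g = f ∨ Θ g = Θ f) := by
    rcases hg with hgf | hgt
    · exact ⟨f, hgf, rfl, hpre, hsuf, hocc, fun h => h, Or.inr rfl⟩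
    · refine ⟨Θ f, hgt, hlff, ?_, ?_, ?_, ?_, Or.inl (hΘ.2 f)⟩
      · obtain ⟨s, hs⟩ := hsuf
        exact ⟨Θ s, by rw [← hs, hΘ.1, hΘ.2]⟩
      · obtain ⟨t, ht⟩ := hpre
        exact ⟨Θ t, by rw [← ht, hΘ.1]⟩
      · intro j hj
        rcases hj with hj | hj
        · have hb := hj.1
          rw [hlff] at hb
          have h1 := occursIn_theta hΘ hj
          rw [hΘ.2, hlff] at h1
          have h2 := hocc _ (Or.inr h1)
          omega
        · have hb := hj.1
          rw [hlff, hlww] at hb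
          have h1 := occursIn_theta hΘ hj
          rw [hΘ.2, hΘ.2, hlff, hlww] at h1
          have h2 := hocc _ (Or.inl h1)
          omega
      · intro h
        rw [hΘ.2] at h
        exact h.symm
  have hNe : N₁ ≤ e - 1 := by omega
  obtain ⟨Q, hQpal, hQsuf, hQnew⟩ := hN (e - 1) hNe
  have he2 : e - 1 + 1 = e := by omega
  rw [he2] at hQsuf
  have hgsufP : g <:+ prefixWord u e := by
    have h1 := suffix_of_occursAt u hgo
    rwa [hglen, ← he] at h1
  have hQlen : Q.length ≤ e := by
    have h1 := hQsuf.length_le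
    rwa [prefixWord_length] at h1
  rcases Nat.lt_or_ge Q.length w.length with hlt | hge
  · exfalso
    have hTw : Θ w <:+ prefixWord u e := hgsw.trans hgsufP
    have hQw' : Q <:+ Θ w := suffix_of_suffix_length_le' hQsuf hTw (by omega)
    have hQw : Q <+: w := by
      have h1 := theta_prefix hΘ hQw'
      rwa [hQpal, hΘ.2] at h1
    have hQg : Q <+: g := hQw.trans hgw
    have hOcc := occursAt_of_prefix u hgo hQg
    exact hQnew (infix_of_occursAt_le u hOcc (by omega))
  · rcases Nat.lt_trichotomy Q.length f.length with hlt2 | heq2 | hgt2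
    · exfalso
      have hQg : Q <:+ g := suffix_of_suffix_length_le' hQsuf hgsufP (by omega)
      have hTwQ : Θ w <:+ Q := suffix_of_suffix_length_le' hgsw hQg (by omega)
      obtain ⟨Y, hY⟩ := hTwQ
      have hQ2 : Q = w ++ Θ Y := by
        rw [← hQpal, ← hY, hΘ.1, hΘ.2]
      obtain ⟨Z, hZ⟩ := hQg
      have hZlen : Z.length = f.length - Q.length := by
        have h1 := congrArg List.length hZ
        rw [List.length_append, hglen] at h1
        omega
      have hOccIn : OccursIn w g Z.length := by
        rw [occursIn_iff']
        exact ⟨Z, Θ Y, by rw [← hZ, hQ2, ← List.append_assoc], rfl⟩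
      have h5 := hgcond Z.length (Or.inl hOccIn)
      have hQw : Q.length = w.length := by omega
      have hYnil : Θ Y = [] := by
        have h1 := congrArg List.length hQ2
        rw [List.length_append] at h1
        exact List.length_eq_zero_iff.mp (by omega)
      have hQw2 : Q = w := by rw [hQ2, hYnil, List.append_nil]
      have hQpre : Q <+: g := by rw [hQw2]; exact hgw
      have hOcc := occursAt_of_prefix u hgo hQpre
      exact hQnew (infix_of_occursAt_le u hOcc (by omega))
    · have hQg : Q <:+ g := suffix_of_suffix_length_le' hQsuf hgsufP (by omega)
      have hQeq : Q = g := suffix_eq_of_length hQg (by omega)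
      exact hggoal (by rw [← hQeq]; exact hQpal)
    · exfalso
      have hgQ : g <:+ Q := suffix_of_suffix_length_le' hgsufP hQsuf (by omega)
      obtain ⟨Z, hZ⟩ := hgQ
      have hQ2 : Q = Θ g ++ Θ Z := by rw [← hQpal, ← hZ, hΘ.1]
      obtain ⟨W, hW⟩ := hQsuf
      have hWlen : W.length + Q.length = e := by
        have h1 := congrArg List.length hW
        rwa [List.length_append, prefixWord_length] at h1
      have hOcc : OccursAt u (Θ g) W.length := by
        apply occursAt_of_eq_append u (m := e) (a := W) (x := Θ g) (b := Θ Z)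
        rw [← hW, hQ2, ← List.append_assoc]
      apply hmin (W.length + f.length) (by omega)
      refine ⟨W.length, rfl, ?_⟩
      rcases hgother with h | h
      · exact Or.inl (by rwa [h] at hOcc)
      · exact Or.inr (by rwa [h] at hOcc)
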